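/- Let b ≥ 0 and let m1, m0 : ℝ → ℝ satisfy the smoothness assumption with constant b on [0,1] and the treatment-cannot-hurt condition m1(v) ≤ m0(v) for all v ∈ [0,1]. Let 0 ≤ p0l ≤ p' ≤ p ≤ p1u ≤ 1 and let Δpl be a constant with 0 < Δpl ≤ p − p', and set ΔY := ∫_{p'}^{p} (m1(v) − m0(v)) dv. Then ∫_0^1 (m1(v) − m0(v)) dv ≥ ( ΔY − (2b/3)·(p1u³ − p0l³) + b·(p1u² − p0l²) − b·(p1u − p0l) ) / Δpl. -/

import Mathlib

/-!
Write `f = m1 - m0`, which is `2b`-Lipschitz on `[0,1]` and nonpositive, and `ATE = ∫₀¹ f`.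
For `u ∈ [0,1]`, `f u - ATE = ∫₀¹ (f u - f v) dv ≤ 2b ∫₀¹ |u - v| dv = 2b (u² - u + 1/2)`.
Integrating over `[p′, p]` gives `ΔY - (p - p′) ATE ≤ 2b ∫_{p′}^{p} (u² - u + 1/2)`, and the
integrand is positive, so the integral may be widened to `[p0l, p1u]`. Finally
`(p - p′) ATE ≤ Δpl ATE` because `ATE ≤ 0`.
-/

open Set intervalIntegral
open scoped NNReal

theorem integral_abs_sub_of_mem_Icc {a c u : ℝ} (hu : u ∈ Icc a c) :
    ∫ v in a..c, |u - v| = ((u - a) ^ 2 + (c - u) ^ 2) / 2 := by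
  have hcont : Continuous fun v : ℝ => |u - v| := by fun_prop
  have below : ∫ v in a..u, |u - v| = ∫ v in a..u, (u - v) :=
    integral_congr fun v hv => by
      rw [uIcc_of_le hu.1] at hv
      exact abs_of_nonneg (sub_nonneg.2 hv.2)
  have above : ∫ v in u..c, |u - v| = ∫ v in u..c, (v - u) :=
    integral_congr fun v hv => by
      rw [uIcc_of_le hu.2] at hv
      exact abs_sub_comm u v ▸ abs_of_nonneg (sub_nonneg.2 hv.1)
  rw [← integral_add_adjacent_intervals (hcont.intervalIntegrable a u)
    (hcont.intervalIntegrable u c), below, above, integral_sub intervalIntegrable_const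
    intervalIntegrable_id, integral_sub intervalIntegrable_id intervalIntegrable_const]
  simp only [integral_const, integral_id, smul_eq_mul]
  ring

theorem integral_sq_sub_add_half (a c : ℝ) :
    ∫ u in a..c, (u ^ 2 - u + 1 / 2) =
      (c ^ 3 - a ^ 3) / 3 - (c ^ 2 - a ^ 2) / 2 + (c - a) / 2 := by
  rw [integral_add ((by fun_prop : Continuous fun u : ℝ => u ^ 2 - u).intervalIntegrable _ _)
    intervalIntegrable_const, integral_sub ((continuous_pow 2).intervalIntegrable _ _)
    intervalIntegrable_id]
  simp only [integral_pow, integral_id, integral_const, smul_eq_mul]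
  ring

namespace LipschitzOnWith

variable {f : ℝ → ℝ} {K : ℝ≥0}

theorem sub_integral_unitInterval_le (hf : LipschitzOnWith K f (Icc 0 1)) {u : ℝ}
    (hu : u ∈ Icc (0 : ℝ) 1) : f u - ∫ v in (0 : ℝ)..1, f v ≤ K * (u ^ 2 - u + 1 / 2) := by
  have hfi : IntervalIntegrable f MeasureTheory.volume 0 1 :=
    (hf.continuousOn.mono (uIcc_of_le zero_le_one).subset).intervalIntegrable
  calc f u - ∫ v in (0 : ℝ)..1, f v = ∫ v in (0 : ℝ)..1, (f u - f v) := by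
        simp [integral_sub intervalIntegrable_const hfi]
    _ ≤ ∫ v in (0 : ℝ)..1, (K : ℝ) * |u - v| := by
        refine integral_mono_on zero_le_one (intervalIntegrable_const.sub hfi)
          ((by fun_prop : Continuous fun v => (K : ℝ) * |u - v|).intervalIntegrable _ _)
          fun v hv => ?_
        simpa only [Real.dist_eq] using (le_abs_self _).trans (hf.dist_le_mul u hu v hv)
    _ = K * (u ^ 2 - u + 1 / 2) := by
        rw [integral_const_mul, integral_abs_sub_of_mem_Icc hu]
        ring

theorem integral_sub_mul_integral_unitInterval_le (hf : LipschitzOnWith K f (Icc 0 1))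
    {q r : ℝ} (hq : 0 ≤ q) (hqr : q ≤ r) (hr : r ≤ 1) :
    (∫ v in q..r, f v) - (r - q) * ∫ v in (0 : ℝ)..1, f v ≤
      K * ∫ u in q..r, (u ^ 2 - u + 1 / 2) := by
  have hfi : IntervalIntegrable f MeasureTheory.volume q r :=
    (hf.continuousOn.mono ((uIcc_of_le hqr).trans_subset
      (Icc_subset_Icc hq hr))).intervalIntegrable
  have hint : (∫ v in q..r, f v) - (r - q) * ∫ v in (0 : ℝ)..1, f v =
      ∫ u in q..r, (f u - ∫ v in (0 : ℝ)..1, f v) := by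
    simp [integral_sub hfi intervalIntegrable_const]
  rw [hint, ← integral_const_mul]
  refine integral_mono_on hqr (hfi.sub intervalIntegrable_const)
    ((by fun_prop : Continuous fun u : ℝ => (K : ℝ) * (u ^ 2 - u + 1 / 2)).intervalIntegrable _ _)
    fun u hu => hf.sub_integral_unitInterval_le ⟨hq.trans hu.1, hu.2.trans hr⟩

end LipschitzOnWith

/-- ATE lower bound with misreporting under smoothness and the
treatment-cannot-hurt condition `m1 ≤ m0` on `[0,1]`:
`ATE ≥ (ΔY - (2b/3)(p1u³ - p0l³) + b(p1u² - p0l²) - b(p1u - p0l)) / Δpl`. -/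
theorem ate_lower_bound_misreporting_treatment_cannot_hurt
    (b : ℝ) (hb : 0 ≤ b) (m1 m0 : ℝ → ℝ)
    (hm1 : ∀ v1 ∈ Set.Icc (0:ℝ) 1, ∀ v2 ∈ Set.Icc (0:ℝ) 1, |m1 v1 - m1 v2| ≤ b * |v1 - v2|)
    (hm0 : ∀ v1 ∈ Set.Icc (0:ℝ) 1, ∀ v2 ∈ Set.Icc (0:ℝ) 1, |m0 v1 - m0 v2| ≤ b * |v1 - v2|)
    (hTCH : ∀ v ∈ Set.Icc (0:ℝ) 1, m1 v ≤ m0 v)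
    (p0l p' p p1u : ℝ) (h0 : 0 ≤ p0l) (h1 : p0l ≤ p') (h2 : p' ≤ p) (h3 : p ≤ p1u)
    (h4 : p1u ≤ 1)
    (Δpl : ℝ) (hΔpl0 : 0 < Δpl) (hΔpl : Δpl ≤ p - p')
    (ΔY : ℝ) (hΔY : ΔY = ∫ v in p'..p, (m1 v - m0 v)) :
    (∫ v in (0:ℝ)..1, (m1 v - m0 v)) ≥
      (ΔY - (2 * b / 3) * (p1u ^ 3 - p0l ^ 3) + b * (p1u ^ 2 - p0l ^ 2)
        - b * (p1u - p0l)) / Δpl := by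
  set ate := ∫ v in (0:ℝ)..1, (m1 v - m0 v)
  have hlip : LipschitzOnWith (b.toNNReal + b.toNNReal) (fun v => m1 v - m0 v) (Icc 0 1) :=
    (LipschitzOnWith.of_dist_le' (by simpa only [Real.dist_eq] using hm1)).sub
      (LipschitzOnWith.of_dist_le' (by simpa only [Real.dist_eq] using hm0))
  have hK : ((b.toNNReal + b.toNNReal : ℝ≥0) : ℝ) = 2 * b := by
    rw [NNReal.coe_add, Real.coe_toNNReal b hb, two_mul]
  have hate : ate ≤ 0 := by
    have h := integral_nonneg (μ := MeasureTheory.volume) zero_le_one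
      fun v hv => neg_nonneg.2 (sub_nonpos.2 (hTCH v hv))
    rw [integral_neg] at h
    linarith
  have hwiden : ∫ u in p'..p, (u ^ 2 - u + 1 / 2) ≤ ∫ u in p0l..p1u, (u ^ 2 - u + 1 / 2) :=
    integral_mono_interval h1 h2 h3
      (MeasureTheory.ae_of_all _ fun u =>
        show 0 ≤ u ^ 2 - u + 1 / 2 by nlinarith [sq_nonneg (u - 1 / 2)])
      ((by fun_prop : Continuous fun u : ℝ => u ^ 2 - u + 1 / 2).intervalIntegrable _ _)
  have hlocal := hlip.integral_sub_mul_integral_unitInterval_le (h0.trans h1) h2 (h3.trans h4)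
  rw [hK, ← hΔY] at hlocal
  rw [ge_iff_le, div_le_iff₀ hΔpl0]
  calc ΔY - 2 * b / 3 * (p1u ^ 3 - p0l ^ 3) + b * (p1u ^ 2 - p0l ^ 2) - b * (p1u - p0l)
      = ΔY - 2 * b * ∫ u in p0l..p1u, (u ^ 2 - u + 1 / 2) := by
        rw [integral_sq_sub_add_half]
        ring
    _ ≤ ΔY - 2 * b * ∫ u in p'..p, (u ^ 2 - u + 1 / 2) := by gcongr
    _ ≤ (p - p') * ate := by linarith
    _ ≤ Δpl * ate := mul_le_mul_of_nonpos_right hΔpl hate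
    _ = ate * Δpl := mul_comm _ _
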